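/- arXiv:2510.19204 — 6 statements merged into one kernel-verified Lean document; each statement's English description precedes it below -/
import Mathlib

section
/- Let S > 0 and let L, K : ℝ → ℝ with L twice continuously differentiable, K continuously differentiable with K' continuously differentiable, L(y) > 0 for all y, satisfying L'' − (L K')' = 0 on ℝ. Assume L'(y) → 0 and K'(y) → 0 as y → +∞, L is bounded, and L(y) → S, K(y) → S as y → +∞. Then L(y) = S e^{−S} e^{K(y)} for all y ∈ ℝ. -/
/-!
The equation says that the flux `L' - L K'` has zero derivative, so it is constant, and the
far-field conditions force that constant to be `0`. Then `L e^{-K}` has derivative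
`(L' - L K') e^{-K} = 0`, so it is constant as well, equal to its limit `S e^{-S}` at `+∞`.
-/

open Filter Topology Real

theorem eq_of_deriv_eq_zero_of_tendsto_atTop {E : Type*} [NormedAddCommGroup E]
    [NormedSpace ℝ E] {f : ℝ → E} {c : E} (hf : Differentiable ℝ f) (hf' : ∀ y, deriv f y = 0)
    (hlim : Tendsto f atTop (𝓝 c)) (y : ℝ) : f y = c := by
  have hconst : f = fun _ => f y := funext fun z => is_const_of_deriv_eq_zero hf hf' z y
  rw [hconst] at hlim
  exact tendsto_const_nhds_iff.mp hlim

theorem deriv_mul_exp_neg {L K : ℝ → ℝ} (hL : Differentiable ℝ L) (hK : Differentiable ℝ K)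
    (y : ℝ) :
    deriv (fun t => L t * exp (-K t)) y = (deriv L y - L y * deriv K y) * exp (-K y) := by
  have hexp : HasDerivAt (fun t => exp (-K t)) (exp (-K y) * -deriv K y) y :=
    (hK y).hasDerivAt.neg.exp
  rw [((hL y).hasDerivAt.fun_mul hexp).deriv]
  ring

theorem flux_eq_zero {L K : ℝ → ℝ} {S : ℝ} (hL : Differentiable ℝ L)
    (hL' : Differentiable ℝ (deriv L)) (hK' : Differentiable ℝ (deriv K))
    (heq : ∀ y, deriv (deriv L) y - deriv (fun t => L t * deriv K t) y = 0)
    (hL'0 : Tendsto (deriv L) atTop (𝓝 0)) (hK'0 : Tendsto (deriv K) atTop (𝓝 0))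
    (hLS : Tendsto L atTop (𝓝 S)) (y : ℝ) :
    deriv L y - L y * deriv K y = 0 := by
  have hprod : Differentiable ℝ fun t => L t * deriv K t := hL.mul hK'
  refine eq_of_deriv_eq_zero_of_tendsto_atTop (f := fun t => deriv L t - L t * deriv K t)
    (hL'.sub hprod) (fun z => ?_) ?_ y
  · rw [deriv_fun_sub (hL' z) (hprod z)]
    exact heq z
  · simpa using hL'0.sub (hLS.mul hK'0)

theorem labor_slaved_to_capital_general (S : ℝ) (L K : ℝ → ℝ)
    (hL : ContDiff ℝ 2 L) (hK : ContDiff ℝ 1 K) (hK' : ContDiff ℝ 1 (deriv K))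
    (heq : ∀ y, deriv (deriv L) y - deriv (fun t => L t * deriv K t) y = 0)
    (hL'0 : Tendsto (deriv L) atTop (nhds 0))
    (hK'0 : Tendsto (deriv K) atTop (nhds 0))
    (hLS : Tendsto L atTop (nhds S))
    (hKS : Tendsto K atTop (nhds S)) :
    ∀ y, L y = S * Real.exp (-S) * Real.exp (K y) := by
  have hLd : Differentiable ℝ L := hL.differentiable (by norm_num)
  have hKd : Differentiable ℝ K := hK.differentiable one_ne_zero
  have hflux := flux_eq_zero hLd ((hL.iterate_deriv' 1 1).differentiable one_ne_zero)
    (hK'.differentiable one_ne_zero) heq hL'0 hK'0 hLS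
  intro y
  have hinv : L y * exp (-K y) = S * exp (-S) :=
    eq_of_deriv_eq_zero_of_tendsto_atTop (f := fun t => L t * exp (-K t))
      (hLd.mul (hKd.neg.exp))
      (fun z => by rw [deriv_mul_exp_neg hLd hKd, hflux z, zero_mul]) (hLS.mul hKS.neg.rexp) y
  rw [← hinv, mul_assoc, ← exp_add, neg_add_cancel, exp_zero, mul_one]

/-- The labor profile is slaved to the capital profile in the leading-order
inner (spike core) system: `L'' - (L K')' = 0` with far-field conditions
`L(+∞) = K(+∞) = S` forces `L = S e^{-S} e^K`. -/
theorem labor_slaved_to_capital (S : ℝ) (hS : 0 < S) (L K : ℝ → ℝ)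
    (hL : ContDiff ℝ 2 L) (hK : ContDiff ℝ 1 K) (hK' : ContDiff ℝ 1 (deriv K))
    (hLpos : ∀ y, 0 < L y)
    (heq : ∀ y, deriv (deriv L) y - deriv (fun t => L t * deriv K t) y = 0)
    (hL'0 : Tendsto (deriv L) atTop (nhds 0))
    (hK'0 : Tendsto (deriv K) atTop (nhds 0))
    (hLbdd : ∃ M, ∀ y, |L y| ≤ M)
    (hLS : Tendsto L atTop (nhds S))
    (hKS : Tendsto K atTop (nhds S)) :
    ∀ y, L y = S * Real.exp (-S) * Real.exp (K y) :=
  labor_slaved_to_capital_general S L K hL hK hK' heq hL'0 hK'0 hLS hKS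
end

section
/- Let θ ∈ (0,1) and 0 < S < 1. Then there exists a nonconstant, even, twice continuously differentiable function K : ℝ → ℝ with K(y) > 0 for all y, satisfying the core profile equation K'' − K + S^{1−θ} K^θ e^{(1−θ)(K−S)} = 0 on ℝ, with K'(0) = 0 and K(y) → S, K'(y) → 0 as y → ±∞. -/
/-!
The equation reads `K'' = f K` with `f u = u - S^(1-θ) u^θ e^((1-θ)(u-S))`, and is solved by
quadrature. Put `W k = ∫_S^k f`. An even solution with `K 0 = b`, `K' 0 = 0` has energy
`K'² = 2 W(K)`, so on `y ≥ 0` it is the inverse of the time map `T k = ∫_k^b du / √(2 W u)`.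
This works whenever `W > 0` on `(S, b)`, `W b = 0` and `f b < 0`, so that the singularity of the
integrand at the turning point `b` is like `(b - u)^(-1/2)` and integrable, and `f u = O(u - S)`,
so that `W = O((u - S)²)`, the integrand is not integrable at `S`, and `T k → ∞` as `k → S`: the
solution reaches the equilibrium `S` only as `y → ±∞`.

For the core nonlinearity, `f u = u (1 - e^((1-θ)(g S - g u)))` with `g u = log u - u`, which
increases on `(0, 1]` and decreases on `[1, ∞)`. Hence `f > 0` on `(S, 1]`, `f → -∞`, and the
first zero `b > 1` of `W` has `f b < 0`.
-/

open Filter Set MeasureTheory Topology Asymptotics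

theorem hasDerivAt_of_even {g : ℝ → ℝ} {g' y : ℝ} (hg : ∀ z, g (-z) = g z)
    (h : HasDerivAt g g' (-y)) : HasDerivAt g (-g') y := by
  simpa [Function.comp_def, hg] using h.comp y (hasDerivAt_neg y)

theorem hasDerivAt_of_odd {g : ℝ → ℝ} {g' y : ℝ} (hg : ∀ z, g (-z) = -g z)
    (h : HasDerivAt g g' (-y)) : HasDerivAt g g' y := by
  have h' := (h.comp y (hasDerivAt_neg y)).neg
  rw [mul_neg_one, neg_neg] at h'
  exact h'.congr_of_eventuallyEq (Eventually.of_forall fun z => by simp [hg])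

theorem contDiff_two_of_hasDerivAt {K v w : ℝ → ℝ} (hK : ∀ y, HasDerivAt K (v y) y)
    (hv : ∀ y, HasDerivAt v (w y) y) (hw : Continuous w) : ContDiff ℝ 2 K := by
  have hdK : deriv K = v := funext fun y => (hK y).deriv
  have hdv : deriv v = w := funext fun y => (hv y).deriv
  rw [show (2 : WithTop ℕ∞) = 1 + 1 from rfl, contDiff_succ_iff_deriv, hdK, contDiff_one_iff_deriv,
    hdv]
  exact ⟨fun y => (hK y).differentiableAt, by simp, fun y => (hv y).differentiableAt, hw⟩

theorem exists_first_zero {W : ℝ → ℝ} {c d : ℝ} (hcd : c ≤ d) (hW : ContinuousOn W (Icc c d))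
    (hc : 0 < W c) (hd : W d < 0) : ∃ b ∈ Ioo c d, W b = 0 ∧ ∀ k ∈ Ico c b, 0 < W k := by
  set s := Icc c d ∩ W ⁻¹' Iic 0
  have hs : BddBelow s := ⟨c, fun k hk => hk.1.1⟩
  obtain ⟨⟨hcb, hbd⟩, hb⟩ : sInf s ∈ s :=
    (hW.preimage_isClosed_of_isClosed isClosed_Icc isClosed_Iic).csInf_mem
      ⟨d, ⟨hcd, le_rfl⟩, hd.le⟩ hs
  have hpos : ∀ k ∈ Ico c (sInf s), 0 < W k := fun k hk => by
    by_contra! hWk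
    exact (csInf_le hs ⟨⟨hk.1, hk.2.le.trans hbd⟩, hWk⟩).not_gt hk.2
  have hcb : c < sInf s := hcb.lt_of_ne fun h => (h ▸ hc).not_ge hb
  have hzero : W (sInf s) = 0 := by
    refine le_antisymm hb (not_lt.1 fun hneg => ?_)
    obtain ⟨k, hk, hWk⟩ :=
      intermediate_value_Ioo' hcb.le (hW.mono (Icc_subset_Icc le_rfl hbd)) ⟨hneg, hc⟩
    exact (hpos k ⟨hk.1.le, hk.2⟩).ne' hWk
  exact ⟨sInf s, ⟨hcb, hbd.lt_of_ne fun h => (h ▸ hd).ne hzero⟩, hzero, hpos⟩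

namespace Quadrature

noncomputable def potential (f : ℝ → ℝ) (a k : ℝ) : ℝ := ∫ u in a..k, f u

noncomputable def slowness (f : ℝ → ℝ) (a k : ℝ) : ℝ := (√(2 * potential f a k))⁻¹

noncomputable def timeMap (f : ℝ → ℝ) (a b k : ℝ) : ℝ := ∫ u in k..b, slowness f a u

noncomputable def profile (f : ℝ → ℝ) (a b y : ℝ) : ℝ :=
  Function.invFunOn (timeMap f a b) (Ioc a b) |y|

noncomputable def speed (f : ℝ → ℝ) (a b y : ℝ) : ℝ := √(2 * potential f a (profile f a b y))

noncomputable def velocity (f : ℝ → ℝ) (a b y : ℝ) : ℝ := -(Real.sign y * speed f a b y)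

variable {f : ℝ → ℝ} {a b : ℝ}

theorem hasDerivAt_potential (hf : Continuous f) (a k : ℝ) :
    HasDerivAt (potential f a) (f k) k :=
  (hf.integral_hasStrictDerivAt a k).hasDerivAt

theorem continuous_potential (hf : Continuous f) (a : ℝ) : Continuous (potential f a) :=
  continuous_iff_continuousAt.2 fun k => (hasDerivAt_potential hf a k).continuousAt

theorem potential_add (hf : Continuous f) (a k l : ℝ) :
    potential f a k + ∫ u in k..l, f u = potential f a l :=
  intervalIntegral.integral_add_adjacent_intervals (hf.intervalIntegrable _ _)
    (hf.intervalIntegrable _ _)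

theorem tendsto_potential_atBot (hf : Continuous f) (h : ∀ᶠ u in atTop, f u ≤ -1) (a : ℝ) :
    Tendsto (potential f a) atTop atBot := by
  obtain ⟨u₀, hu₀⟩ := eventually_atTop.1 h
  have hle : ∀ k ≥ u₀, potential f a k ≤ potential f a u₀ + u₀ + -k := fun k hk => by
    have : ∫ u in u₀..k, f u ≤ ∫ _ in u₀..k, (-1 : ℝ) :=
      intervalIntegral.integral_mono_on hk (hf.intervalIntegrable _ _)
        (continuous_const.intervalIntegrable _ _) fun u hu => hu₀ u hu.1
    rw [intervalIntegral.integral_const, smul_eq_mul, mul_neg_one] at this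
    linarith [potential_add hf a u₀ k]
  exact tendsto_atBot_mono' _ (eventually_ge_atTop u₀ |>.mono hle)
    (tendsto_atBot_add_const_left _ _ tendsto_neg_atTop_atBot)

theorem slowness_nonneg (k : ℝ) : 0 ≤ slowness f a k := by
  unfold slowness
  positivity

theorem profile_neg (y : ℝ) : profile f a b (-y) = profile f a b y := by
  rw [profile, abs_neg, profile]

theorem timeMap_right : timeMap f a b b = 0 := intervalIntegral.integral_same

theorem velocity_zero : velocity f a b 0 = 0 := by simp [velocity]

theorem velocity_neg (y : ℝ) : velocity f a b (-y) = -velocity f a b y := by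
  simp [velocity, speed, profile_neg, Real.sign_neg]

structure IsHomoclinicWell (f : ℝ → ℝ) (a b : ℝ) : Prop where
  continuous : Continuous f
  lt : a < b
  isBigO : f =O[𝓝 a] fun u => u - a
  potential_pos : ∀ k ∈ Ioo a b, 0 < potential f a k
  potential_right : potential f a b = 0
  neg_right : f b < 0

namespace IsHomoclinicWell

variable (h : IsHomoclinicWell f a b)
include h

theorem slowness_pos {k : ℝ} (hk : k ∈ Ioo a b) : 0 < slowness f a k := by
  have := h.potential_pos k hk
  unfold slowness
  positivity

theorem continuousAt_slowness {k : ℝ} (hk : k ∈ Ioo a b) : ContinuousAt (slowness f a) k :=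
  ((continuous_potential h.continuous a).continuousAt.const_mul 2).sqrt.inv₀
    (Real.sqrt_pos.2 (by linarith [h.potential_pos k hk])).ne'

theorem exists_potential_le_sq : ∃ c > 0, ∀ᶠ u in 𝓝[>] a, potential f a u ≤ c * (u - a) ^ 2 := by
  obtain ⟨c, hc0, hc⟩ := h.isBigO.exists_pos
  obtain ⟨δ, hδ, hfδ⟩ := Metric.eventually_nhds_iff.1 hc.bound
  refine ⟨c, hc0, ?_⟩
  filter_upwards [Ioo_mem_nhdsGT (by linarith : a < a + δ)] with u hu
  have hW : ‖potential f a u‖ ≤ c * (u - a) * |u - a| := by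
    refine intervalIntegral.norm_integral_le_of_norm_le_const fun t ht => ?_
    rw [uIoc_of_le hu.1.le] at ht
    have hta : 0 < t - a := sub_pos.2 ht.1
    calc ‖f t‖ ≤ c * ‖t - a‖ := hfδ (by rw [Real.dist_eq, abs_of_pos hta]; linarith [hu.2, ht.2])
      _ ≤ c * (u - a) := by
        rw [Real.norm_of_nonneg hta.le]
        exact mul_le_mul_of_nonneg_left (by linarith [ht.2]) hc0.le
  rw [abs_of_pos (sub_pos.2 hu.1)] at hW
  nlinarith [le_abs_self (potential f a u), Real.norm_eq_abs (potential f a u)]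

theorem isBigO_inv_sub_slowness : (fun u => (u - a)⁻¹) =O[𝓝[>] a] slowness f a := by
  obtain ⟨c, hc0, hc⟩ := h.exists_potential_le_sq
  refine IsBigO.of_bound √(2 * c) ?_
  filter_upwards [hc, Ioo_mem_nhdsGT h.lt] with u hWu hu
  have hua : 0 < u - a := sub_pos.2 hu.1
  have hsqrt : √(2 * potential f a u) ≤ √(2 * c) * (u - a) := by
    rw [Real.sqrt_le_left (by positivity), mul_pow, Real.sq_sqrt (by positivity)]
    linarith
  rw [Real.norm_of_nonneg (inv_pos.2 hua).le, Real.norm_of_nonneg (slowness_nonneg u), slowness]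
  calc (u - a)⁻¹ = √(2 * c) * (√(2 * c) * (u - a))⁻¹ := by field_simp
    _ ≤ √(2 * c) * (√(2 * potential f a u))⁻¹ :=
        mul_le_mul_of_nonneg_left (inv_anti₀ (Real.sqrt_pos.2 (by linarith [h.potential_pos u hu]))
          hsqrt) (Real.sqrt_nonneg _)

theorem not_intervalIntegrable_slowness : ¬IntervalIntegrable (slowness f a) volume a b := by
  have hlog : ∀ᶠ u in 𝓝[>] a, HasDerivAt (fun u => Real.log (u - a)) (u - a)⁻¹ u := by
    filter_upwards [self_mem_nhdsWithin] with u hu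
    simpa using ((hasDerivAt_id u).sub_const a).log (sub_ne_zero.2 (ne_of_gt hu))
  have hsub : Tendsto (fun u => u - a) (𝓝[>] a) (𝓝[≠] 0) := by
    simpa using (((hasDerivAt_id a).sub_const a).tendsto_nhdsNE one_ne_zero).mono_left
      (nhdsGT_le_nhdsNE a)
  refine not_intervalIntegrable_of_tendsto_norm_atTop_of_deriv_isBigO_filter (𝓝[>] a) ?_
    (hlog.mono fun u hu => hu.differentiableAt)
    (tendsto_abs_atBot_atTop.comp (Real.tendsto_log_nhdsNE_zero.comp hsub)) ?_
  · rw [uIcc_of_le h.lt.le]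
    exact Icc_mem_nhdsGT h.lt
  · exact h.isBigO_inv_sub_slowness.congr' (hlog.mono fun u hu => hu.deriv.symm) EventuallyEq.rfl

-- The junk value `0⁻¹ = 0`; harmless, as `b` is a null set for the time integrals.
theorem slowness_right : slowness f a b = 0 := by simp [slowness, h.potential_right]

theorem eventually_le_potential :
    ∀ᶠ u in 𝓝[<] b, -f b / 2 * (b - u) ≤ potential f a u := by
  have hslope := hasDerivAt_iff_tendsto_slope.1 (hasDerivAt_potential h.continuous a b)
  filter_upwards [(hslope.mono_left (nhdsLT_le_nhdsNE b)).eventually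
    (Iio_mem_nhds (by linarith [h.neg_right] : f b < f b / 2)), self_mem_nhdsWithin] with u hu hub
  rw [slope_def_field, h.potential_right, sub_zero,
    div_lt_iff_of_neg (sub_neg.2 hub)] at hu
  linarith

theorem exists_slowness_le_rpow :
    ∃ d < b, ∀ u ∈ Ioc d b, slowness f a u ≤ (√(-f b))⁻¹ * (b - u) ^ (-(1 / 2) : ℝ) := by
  obtain ⟨d, hdb, hd⟩ := mem_nhdsLT_iff_exists_Ioo_subset.1 h.eventually_le_potential
  refine ⟨d, hdb, fun u hu => ?_⟩
  rcases hu.2.eq_or_lt with rfl | hub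
  · rw [h.slowness_right, sub_self]
    positivity
  have hbu : 0 < b - u := sub_pos.2 hub
  have hfb : 0 < -f b := by linarith [h.neg_right]
  have hlin : -f b / 2 * (b - u) ≤ potential f a u := hd ⟨hu.1, hub⟩
  calc slowness f a u ≤ (√(-f b * (b - u)))⁻¹ :=
        inv_anti₀ (by positivity) (Real.sqrt_le_sqrt (by linarith))
    _ = (√(-f b))⁻¹ * (b - u) ^ (-(1 / 2) : ℝ) := by
        rw [Real.sqrt_mul hfb.le, mul_inv, Real.rpow_neg hbu.le, ← Real.sqrt_eq_rpow]

theorem intervalIntegrable_slowness {k : ℝ} (hk : a < k) (hkb : k ≤ b) :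
    IntervalIntegrable (slowness f a) volume k b := by
  rcases hkb.eq_or_lt with rfl | hkb
  · exact .refl
  obtain ⟨d, hdb, hd⟩ := h.exists_slowness_le_rpow
  set d' := max d k
  have hd'b : d' < b := max_lt hdb hkb
  have hnear : IntervalIntegrable (slowness f a) volume d' b := by
    have hrpow := ((intervalIntegral.intervalIntegrable_rpow' (a := 0) (b := b - d')
      (r := -(1 / 2)) (by norm_num)).comp_sub_left b).symm.const_mul (√(-f b))⁻¹
    simp only [sub_zero, sub_sub_cancel] at hrpow
    have hmeas := ((continuous_potential h.continuous a).const_mul 2).sqrt.measurable.inv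
    refine hrpow.mono_fun' hmeas.aestronglyMeasurable
      ((ae_restrict_iff' measurableSet_uIoc).2 (ae_of_all _ fun u hu => ?_))
    rw [uIoc_of_le hd'b.le] at hu
    simp only [Real.norm_of_nonneg (slowness_nonneg u)]
    exact hd u ⟨(le_max_left _ _).trans_lt hu.1, hu.2⟩
  have hfar : IntervalIntegrable (slowness f a) volume k d' := by
    refine ContinuousOn.intervalIntegrable fun u hu => ?_
    rw [uIcc_of_le (le_max_right _ _)] at hu
    exact (h.continuousAt_slowness ⟨hk.trans_le hu.1, hu.2.trans_lt hd'b⟩).continuousWithinAt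
  exact hfar.trans hnear

theorem timeMap_eq_add {k l : ℝ} (hk : a < k) (hkl : k ≤ l) (hl : l ≤ b) :
    timeMap f a b k = (∫ u in k..l, slowness f a u) + timeMap f a b l :=
  (intervalIntegral.integral_add_adjacent_intervals
    ((h.intervalIntegrable_slowness hk (hkl.trans hl)).trans
      (h.intervalIntegrable_slowness (hk.trans_le hkl) hl).symm)
    (h.intervalIntegrable_slowness (hk.trans_le hkl) hl)).symm

theorem strictAntiOn_timeMap : StrictAntiOn (timeMap f a b) (Ioc a b) := by
  intro k hk l hl hkl
  rw [h.timeMap_eq_add hk.1 hkl.le hl.2, lt_add_iff_pos_left]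
  refine intervalIntegral.intervalIntegral_pos_of_pos_on ?_
    (fun u hu => h.slowness_pos ⟨hk.1.trans hu.1, hu.2.trans_le hl.2⟩) hkl
  exact (h.intervalIntegrable_slowness hk.1 hk.2).trans
    (h.intervalIntegrable_slowness hl.1 hl.2).symm

theorem continuousOn_timeMap {k : ℝ} (hk : a < k) (hkb : k ≤ b) :
    ContinuousOn (timeMap f a b) (Icc k b) := by
  have := intervalIntegral.continuousOn_primitive_interval_left
    (uIcc_of_le hkb ▸ (intervalIntegrable_iff_integrableOn_Icc_of_le hkb).1
      (h.intervalIntegrable_slowness hk hkb))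
  rwa [uIcc_of_le hkb] at this

theorem hasDerivAt_timeMap {k : ℝ} (hk : k ∈ Ioo a b) :
    HasDerivAt (timeMap f a b) (-slowness f a k) k :=
  intervalIntegral.integral_hasDerivAt_left (h.intervalIntegrable_slowness hk.1 hk.2.le)
    (ContinuousOn.stronglyMeasurableAtFilter isOpen_Ioo
      (fun _ hu => (h.continuousAt_slowness hu).continuousWithinAt) k hk)
    (h.continuousAt_slowness hk)

theorem exists_lt_timeMap (t : ℝ) : ∃ k ∈ Ioc a b, t < timeMap f a b k := by
  by_contra! hT
  set s : ℕ → ℝ := fun n => a + (b - a) * (1 / (n + 1))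
  have hs : ∀ n, s n ∈ Ioc a b := fun n => by
    have hn : (0 : ℝ) < 1 / (n + 1) := by positivity
    have hn1 : 1 / ((n : ℝ) + 1) ≤ 1 := by
      rw [div_le_one (by positivity)]; linarith [n.cast_nonneg (α := ℝ)]
    constructor <;> nlinarith [h.lt]
  refine h.not_intervalIntegrable_slowness ?_
  rw [intervalIntegrable_iff_integrableOn_Ioc_of_le h.lt.le]
  refine integrableOn_Ioc_of_intervalIntegral_norm_bounded_left (I := t) (a := s) (l := atTop)
    (fun n => (h.intervalIntegrable_slowness (hs n).1 (hs n).2).def'.mono_set ?_) ?_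
    (Eventually.of_forall fun n => ?_)
  · rw [uIoc_of_le (hs n).2]
  · simpa [s] using (tendsto_const_nhds (x := a)).add
      (tendsto_one_div_add_atTop_nhds_zero_nat.const_mul (b - a))
  · simp only [Real.norm_of_nonneg (slowness_nonneg _), ← intervalIntegral.integral_of_le (hs n).2]
    exact hT (s n) (hs n)

theorem surjOn_timeMap : SurjOn (timeMap f a b) (Ioc a b) (Ici 0) := by
  intro t ht
  obtain ⟨k, hk, htk⟩ := h.exists_lt_timeMap t
  obtain ⟨l, hl, hlt⟩ := intermediate_value_Icc' hk.2 (h.continuousOn_timeMap hk.1 hk.2)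
    ⟨timeMap_right (f := f) ▸ ht, htk.le⟩
  exact ⟨l, ⟨hk.1.trans_le hl.1, hl.2⟩, hlt⟩

theorem profile_mem (y : ℝ) : profile f a b y ∈ Ioc a b :=
  Function.invFunOn_mem (h.surjOn_timeMap (abs_nonneg y))

theorem timeMap_profile (y : ℝ) : timeMap f a b (profile f a b y) = |y| :=
  Function.invFunOn_eq (h.surjOn_timeMap (abs_nonneg y))

theorem lt_profile_iff {k y : ℝ} (hk : k ∈ Ioc a b) :
    k < profile f a b y ↔ |y| < timeMap f a b k := by
  rw [← h.timeMap_profile y]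
  exact (h.strictAntiOn_timeMap.lt_iff_gt (h.profile_mem y) hk).symm

theorem profile_lt_iff {k y : ℝ} (hk : k ∈ Ioc a b) :
    profile f a b y < k ↔ timeMap f a b k < |y| := by
  rw [← h.timeMap_profile y]
  exact (h.strictAntiOn_timeMap.lt_iff_gt hk (h.profile_mem y)).symm

theorem profile_lt_right {y : ℝ} (hy : y ≠ 0) : profile f a b y < b := by
  rw [h.profile_lt_iff ⟨h.lt, le_rfl⟩, timeMap_right]
  exact abs_pos.2 hy

theorem profile_zero : profile f a b 0 = b := by
  refine le_antisymm (h.profile_mem 0).2 (not_lt.1 fun hlt => ?_)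
  rw [h.profile_lt_iff ⟨h.lt, le_rfl⟩, timeMap_right, abs_zero] at hlt
  exact hlt.false

theorem continuous_profile : Continuous (profile f a b) := by
  refine continuous_iff_continuousAt.2 fun y₀ => tendsto_order.2 ⟨fun c hc => ?_, fun c hc => ?_⟩
  · obtain ⟨k, hck, hk⟩ := exists_between (max_lt hc (h.profile_mem y₀).1)
    have hkmem : k ∈ Ioc a b := ⟨(le_max_right _ _).trans_lt hck, hk.le.trans (h.profile_mem y₀).2⟩
    filter_upwards [continuous_abs.continuousAt.eventually_lt continuousAt_const
      ((h.lt_profile_iff hkmem).1 hk)] with y hy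
    exact (le_max_left _ _).trans_lt (hck.trans ((h.lt_profile_iff hkmem).2 hy))
  · obtain ⟨k, hk, hkc⟩ := exists_between hc
    rcases le_or_gt k b with hkb | hbk
    · have hkmem : k ∈ Ioc a b := ⟨(h.profile_mem y₀).1.trans hk, hkb⟩
      filter_upwards [continuousAt_const.eventually_lt continuous_abs.continuousAt
        ((h.profile_lt_iff hkmem).1 hk)] with y hy
      exact ((h.profile_lt_iff hkmem).2 hy).trans hkc
    · exact Eventually.of_forall fun y => (h.profile_mem y).2.trans_lt (hbk.trans hkc)

theorem tendsto_profile {l : Filter ℝ} (hl : Tendsto (fun y => |y|) l atTop) :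
    Tendsto (profile f a b) l (𝓝 a) := by
  refine tendsto_order.2 ⟨fun c hc => Eventually.of_forall fun y => hc.trans (h.profile_mem y).1,
    fun c hc => ?_⟩
  obtain ⟨k, hk, hkc⟩ := exists_between (lt_min hc h.lt)
  have hkmem : k ∈ Ioc a b := ⟨hk, hkc.le.trans (min_le_right _ _)⟩
  filter_upwards [hl.eventually_gt_atTop (timeMap f a b k)] with y hy
  exact ((h.profile_lt_iff hkmem).2 hy).trans (hkc.trans_le (min_le_left _ _))

theorem hasDerivAt_profile_of_pos {y : ℝ} (hy : 0 < y) :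
    HasDerivAt (profile f a b) (-speed f a b y) y := by
  have hk : profile f a b y ∈ Ioo a b := ⟨(h.profile_mem y).1, h.profile_lt_right hy.ne'⟩
  have hinv := (h.hasDerivAt_timeMap hk).of_local_left_inverse h.continuous_profile.continuousAt
    (neg_ne_zero.2 (h.slowness_pos hk).ne') (by
      filter_upwards [Ioi_mem_nhds hy] with z hz
      rw [h.timeMap_profile, abs_of_pos hz])
  rwa [slowness, inv_neg, inv_inv] at hinv

theorem hasDerivAt_speed_of_pos {y : ℝ} (hy : 0 < y) :
    HasDerivAt (speed f a b) (-f (profile f a b y)) y := by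
  have hW := h.potential_pos _ ⟨(h.profile_mem y).1, h.profile_lt_right hy.ne'⟩
  have hspeed : 0 < speed f a b y := Real.sqrt_pos.2 (by linarith)
  have hs : √(2 * potential f a (profile f a b y)) = speed f a b y := rfl
  convert (((hasDerivAt_potential h.continuous a _).comp y
    (h.hasDerivAt_profile_of_pos hy)).const_mul 2).sqrt (by positivity) using 1
  · rfl
  · simp only [Function.comp_apply, hs]
    field_simp

theorem hasDerivAt_profile_velocity_of_pos {y : ℝ} (hy : 0 < y) :
    HasDerivAt (profile f a b) (velocity f a b y) y ∧
      HasDerivAt (velocity f a b) (f (profile f a b y)) y := by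
  have hv : velocity f a b =ᶠ[𝓝 y] fun z => -speed f a b z := by
    filter_upwards [Ioi_mem_nhds hy] with z hz
    simp [velocity, Real.sign_of_pos hz]
  rw [hv.eq_of_nhds]
  exact ⟨h.hasDerivAt_profile_of_pos hy,
    by simpa using (h.hasDerivAt_speed_of_pos hy).neg.congr_of_eventuallyEq hv⟩

theorem hasDerivAt_profile_velocity_of_ne_zero {y : ℝ} (hy : y ≠ 0) :
    HasDerivAt (profile f a b) (velocity f a b y) y ∧
      HasDerivAt (velocity f a b) (f (profile f a b y)) y := by
  rcases hy.lt_or_gt with hy | hy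
  · obtain ⟨hK, hv⟩ := h.hasDerivAt_profile_velocity_of_pos (neg_pos.2 hy)
    exact ⟨by simpa [velocity_neg] using hasDerivAt_of_even profile_neg hK,
      by simpa [profile_neg] using hasDerivAt_of_odd velocity_neg hv⟩
  · exact h.hasDerivAt_profile_velocity_of_pos hy

theorem tendsto_velocity {l : Filter ℝ} {k : ℝ} (hK : Tendsto (profile f a b) l (𝓝 k))
    (hk : potential f a k = 0) : Tendsto (velocity f a b) l (𝓝 0) := by
  have hspeed : Tendsto (speed f a b) l (𝓝 0) := by
    have := (((continuous_potential h.continuous a).const_mul 2).sqrt.tendsto k).comp hK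
    rwa [hk, mul_zero, Real.sqrt_zero] at this
  refine squeeze_zero_norm (fun y => ?_) hspeed
  have hsign : ‖Real.sign y‖ ≤ 1 := by
    rcases Real.sign_apply_eq y with hs | hs | hs <;> simp [hs]
  have hsp : 0 ≤ speed f a b y := Real.sqrt_nonneg _
  rw [velocity, norm_neg, norm_mul, Real.norm_of_nonneg hsp]
  exact mul_le_of_le_one_left hsp hsign

theorem continuousAt_velocity_zero : ContinuousAt (velocity f a b) 0 := by
  rw [ContinuousAt, velocity_zero]
  exact h.tendsto_velocity (h.continuous_profile.tendsto 0)
    (by rw [h.profile_zero, h.potential_right])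

theorem hasDerivAt_profile (y : ℝ) : HasDerivAt (profile f a b) (velocity f a b y) y :=
  hasDerivAt_of_hasDerivAt_of_ne' (fun _ hz => (h.hasDerivAt_profile_velocity_of_ne_zero hz).1)
    h.continuous_profile.continuousAt h.continuousAt_velocity_zero y

theorem hasDerivAt_velocity (y : ℝ) : HasDerivAt (velocity f a b) (f (profile f a b y)) y :=
  hasDerivAt_of_hasDerivAt_of_ne' (fun _ hz => (h.hasDerivAt_profile_velocity_of_ne_zero hz).2)
    h.continuousAt_velocity_zero (h.continuous.comp h.continuous_profile).continuousAt y

theorem contDiff_profile : ContDiff ℝ 2 (profile f a b) :=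
  contDiff_two_of_hasDerivAt h.hasDerivAt_profile h.hasDerivAt_velocity
    (h.continuous.comp h.continuous_profile)

end IsHomoclinicWell

end Quadrature

open Quadrature

noncomputable def coreNonlinearity (θ S u : ℝ) : ℝ :=
  u - S ^ (1 - θ) * u ^ θ * Real.exp ((1 - θ) * (u - S))

section CoreNonlinearity

variable {θ S : ℝ}

theorem strictMonoOn_log_sub_self : StrictMonoOn (fun u => Real.log u - u) (Ioc 0 1) := by
  intro u hu v hv huv
  have hlog := Real.log_lt_sub_one_of_pos (div_pos hu.1 hv.1) (div_lt_one hv.1 |>.2 huv).ne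
  rw [Real.log_div hu.1.ne' hv.1.ne'] at hlog
  have : u / v - 1 ≤ u - v := by
    rw [div_sub_one hv.1.ne', div_le_iff₀ hv.1]
    nlinarith [hv.2]
  dsimp only
  linarith

theorem strictAntiOn_log_sub_self : StrictAntiOn (fun u => Real.log u - u) (Ici 1) := by
  intro u hu v hv huv
  have hu0 : 0 < u := one_pos.trans_le hu
  have hlog := Real.log_lt_sub_one_of_pos (div_pos (hu0.trans huv) hu0)
    (one_lt_div hu0 |>.2 huv).ne'
  rw [Real.log_div (hu0.trans huv).ne' hu0.ne'] at hlog
  have : v / u - 1 ≤ v - u := by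
    rw [div_sub_one hu0.ne', div_le_iff₀ hu0]
    nlinarith [show (1 : ℝ) ≤ u from hu]
  dsimp only
  linarith

theorem continuous_coreNonlinearity (hθ : 0 < θ) : Continuous (coreNonlinearity θ S) := by
  have := Real.continuous_rpow_const hθ.le
  unfold coreNonlinearity
  fun_prop

theorem coreNonlinearity_eq (hS : 0 < S) {u : ℝ} (hu : 0 < u) :
    coreNonlinearity θ S u =
      u * (1 - Real.exp ((1 - θ) * ((Real.log S - S) - (Real.log u - u)))) := by
  have hexp : u * Real.exp ((1 - θ) * ((Real.log S - S) - (Real.log u - u))) =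
      Real.exp (Real.log u + (1 - θ) * ((Real.log S - S) - (Real.log u - u))) := by
    rw [Real.exp_add, Real.exp_log hu]
  rw [coreNonlinearity, mul_one_sub, hexp, Real.rpow_def_of_pos hS, Real.rpow_def_of_pos hu,
    ← Real.exp_add, ← Real.exp_add]
  ring_nf

theorem coreNonlinearity_pos (hθ : θ < 1) (hS : 0 < S) {u : ℝ} (hu : 0 < u)
    (h : Real.log S - S < Real.log u - u) : 0 < coreNonlinearity θ S u := by
  rw [coreNonlinearity_eq hS hu]
  have : Real.exp ((1 - θ) * ((Real.log S - S) - (Real.log u - u))) < 1 :=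
    Real.exp_lt_one_iff.2 (mul_neg_of_pos_of_neg (by linarith) (by linarith))
  nlinarith

theorem coreNonlinearity_neg (hθ : θ < 1) (hS : 0 < S) {u : ℝ} (hu : 0 < u)
    (h : Real.log u - u < Real.log S - S) : coreNonlinearity θ S u < 0 := by
  rw [coreNonlinearity_eq hS hu]
  have : 1 < Real.exp ((1 - θ) * ((Real.log S - S) - (Real.log u - u))) :=
    Real.one_lt_exp_iff.2 (mul_pos (by linarith) (by linarith))
  nlinarith

theorem eventually_coreNonlinearity_le (hθ : θ < 1) (hS : 0 < S) :
    ∀ᶠ u in atTop, coreNonlinearity θ S u ≤ -1 := by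
  have hlog : ∀ᶠ u in atTop, Real.log u ≤ u / 2 := by
    filter_upwards [Real.isLittleO_log_id_atTop.bound (by norm_num : (0 : ℝ) < 1 / 2),
      eventually_ge_atTop 0] with u hu hu0
    simpa [abs_of_nonneg hu0, div_eq_inv_mul] using (le_abs_self _).trans hu
  have hexp : Tendsto (fun u => (1 - θ) * ((Real.log S - S) + u / 2)) atTop atTop :=
    (tendsto_atTop_add_const_left _ _ (tendsto_id.atTop_div_const two_pos)).const_mul_atTop
      (by linarith)
  filter_upwards [hlog, hexp.eventually_ge_atTop (Real.log 2), eventually_ge_atTop 1]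
    with u hlogu hu hu1
  have h2 : 2 ≤ Real.exp ((1 - θ) * ((Real.log S - S) - (Real.log u - u))) := by
    rw [← Real.log_le_iff_le_exp two_pos]
    exact hu.trans (mul_le_mul_of_nonneg_left (by linarith) (by linarith))
  rw [coreNonlinearity_eq hS (by linarith)]
  nlinarith

theorem isBigO_coreNonlinearity (hS : 0 < S) :
    coreNonlinearity θ S =O[𝓝 S] fun u => u - S := by
  have hd : DifferentiableAt ℝ (coreNonlinearity θ S) S := by
    unfold coreNonlinearity
    fun_prop (disch := positivity)
  simpa [coreNonlinearity_eq hS hS] using hd.hasDerivAt.isBigO_sub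

theorem potential_coreNonlinearity_pos (hθ : θ ∈ Ioo 0 1) (hS : S ∈ Ioo 0 1) {k : ℝ}
    (hk : k ∈ Ioc S 1) : 0 < potential (coreNonlinearity θ S) S k :=
  intervalIntegral.intervalIntegral_pos_of_pos_on
    ((continuous_coreNonlinearity hθ.1).intervalIntegrable _ _)
    (fun _ hu => coreNonlinearity_pos hθ.2 hS.1 (hS.1.trans hu.1)
      (strictMonoOn_log_sub_self ⟨hS.1, hS.2.le⟩ ⟨hS.1.trans hu.1, hu.2.le.trans hk.2⟩ hu.1))
    hk.1

theorem coreNonlinearity_neg_of_potential_eq_zero (hθ : θ ∈ Ioo 0 1) (hS : 0 < S) {b : ℝ}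
    (hb : 1 < b) (hW₁ : 0 < potential (coreNonlinearity θ S) S 1)
    (hW : potential (coreNonlinearity θ S) S b = 0) : coreNonlinearity θ S b < 0 := by
  have hf := continuous_coreNonlinearity (S := S) hθ.1
  by_contra! hfb
  have hgb : Real.log S - S ≤ Real.log b - b :=
    not_lt.1 fun hlt => (coreNonlinearity_neg hθ.2 hS (by linarith) hlt).not_ge hfb
  have hint : 0 < ∫ u in (1 : ℝ)..b, coreNonlinearity θ S u :=
    intervalIntegral.intervalIntegral_pos_of_pos_on (hf.intervalIntegrable _ _)
      (fun u hu => coreNonlinearity_pos hθ.2 hS (one_pos.trans hu.1)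
        (hgb.trans_lt (strictAntiOn_log_sub_self hu.1.le (hu.1.trans hu.2).le hu.2))) hb
  linarith [potential_add hf S 1 b]

theorem isHomoclinicWell_coreNonlinearity (hθ : θ ∈ Ioo 0 1) (hS : S ∈ Ioo 0 1) :
    ∃ b, IsHomoclinicWell (coreNonlinearity θ S) S b := by
  have hf : Continuous (coreNonlinearity θ S) := continuous_coreNonlinearity hθ.1
  have hW₁ := potential_coreNonlinearity_pos hθ hS ⟨hS.2, le_rfl⟩
  obtain ⟨d, hWd, hd⟩ := (((tendsto_potential_atBot hf
    (eventually_coreNonlinearity_le hθ.2 hS.1) S).eventually (eventually_lt_atBot 0)).and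
      (eventually_ge_atTop 1)).exists
  obtain ⟨b, hb, hWb, hWpos⟩ :=
    exists_first_zero hd (continuous_potential hf S).continuousOn hW₁ hWd
  refine ⟨b, hf, hS.2.trans hb.1, isBigO_coreNonlinearity hS.1, fun k hk => ?_, hWb,
    coreNonlinearity_neg_of_potential_eq_zero hθ hS.1 hb.1 hW₁ hWb⟩
  rcases le_or_gt k 1 with hk1 | hk1
  · exact potential_coreNonlinearity_pos hθ hS ⟨hk.1, hk1⟩
  · exact hWpos k ⟨hk1.le, hk.2⟩

end CoreNonlinearity

/-- Existence of a nonconstant even homoclinic (to `S`) solution of the core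
profile equation `K'' - K + S^{1-θ} K^θ e^{(1-θ)(K-S)} = 0` for `0 < S < 1`. -/
theorem exists_core_profile_homoclinic (θ S : ℝ) (hθ : θ ∈ Set.Ioo (0 : ℝ) 1)
    (hS : S ∈ Set.Ioo (0 : ℝ) 1) :
    ∃ K : ℝ → ℝ, ContDiff ℝ 2 K ∧ (∃ y₁ y₂, K y₁ ≠ K y₂) ∧
      (∀ y, K (-y) = K y) ∧ (∀ y, 0 < K y) ∧
      (∀ y, deriv (deriv K) y - K y
        + S ^ (1 - θ) * K y ^ θ * Real.exp ((1 - θ) * (K y - S)) = 0) ∧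
      deriv K 0 = 0 ∧
      Tendsto K atTop (nhds S) ∧ Tendsto K atBot (nhds S) ∧
      Tendsto (deriv K) atTop (nhds 0) ∧ Tendsto (deriv K) atBot (nhds 0) := by
  obtain ⟨b, hw⟩ := isHomoclinicWell_coreNonlinearity hθ hS
  have hK' : deriv (profile (coreNonlinearity θ S) S b) = velocity (coreNonlinearity θ S) S b :=
    funext fun y => (hw.hasDerivAt_profile y).deriv
  have hatTop := hw.tendsto_profile tendsto_abs_atTop_atTop
  have hatBot := hw.tendsto_profile tendsto_abs_atBot_atTop
  refine ⟨profile (coreNonlinearity θ S) S b, hw.contDiff_profile,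
    ⟨0, 1, by rw [hw.profile_zero]; exact (hw.profile_lt_right one_ne_zero).ne'⟩, profile_neg,
    fun y => hS.1.trans (hw.profile_mem y).1, fun y => ?_, by rw [hK', velocity_zero], hatTop,
    hatBot, ?_, ?_⟩
  · rw [hK', (hw.hasDerivAt_velocity y).deriv, coreNonlinearity]
    ring
  · rw [hK']
    exact hw.tendsto_velocity hatTop intervalIntegral.integral_same
  · rw [hK']
    exact hw.tendsto_velocity hatBot intervalIntegral.integral_same
end

section
/- Let θ ∈ (0,1), S > 0, let K0 : ℝ → ℝ be three times continuously differentiable, positive, solving the core profile equation K0'' − K0 + S^{1−θ} K0^θ e^{(1−θ)(K0−S)} = 0 on ℝ, with K0(y) → S and K0'(y) → 0 as y → +∞, and set L0 := S e^{K0 − S}. Define Q := K0' and P(y) := ((1−θ)/2) ∫_0^y (1/L0(z)) (K0'(z)² − (K0(z)² − S²)) dz. Then (P, Q) lies in the kernel of the adjoint of the linearized operator; explicitly, P'' + K0' P' + (1−θ) K0^θ L0^{−θ} Q = 0 and Q'' − Q + θ K0^{θ−1} L0^{1−θ} Q − L0' P' − L0 P'' = 0 on ℝ. -/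
open Filter Real

/-!
Write `N = K0^θ L0^(1-θ)`, so that the profile equation reads `K0'' = K0 - N`, and note that
`L0' = L0 K0'`. Since `L0` is an integrating factor for `u ↦ u' + K0' u`, the definition of `P`
gives `P'' + K0' P' = (1-θ) K0' (K0'' - K0) / L0 = -(1-θ) K0^θ L0^(-θ) K0'`, which is the first
equation. Differentiating the profile equation gives `K0''' = K0' - N'`, and the second equation is
the first one multiplied by `L0`.
-/

theorem hasDerivAt_const_mul_exp_sub {K : ℝ → ℝ} {k y : ℝ} (c a : ℝ) (hK : HasDerivAt K k y) :
    HasDerivAt (fun z => c * exp (K z - a)) (c * exp (K y - a) * k) y := by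
  simpa [mul_assoc] using ((hK.sub_const a).exp).const_mul c

theorem HasDerivAt.one_div_mul_of_hasDerivAt_self_mul {G L : ℝ → ℝ} {g k y : ℝ}
    (hG : HasDerivAt G g y) (hL : HasDerivAt L (L y * k) y) (hLy : L y ≠ 0) :
    HasDerivAt (fun z => 1 / L z * G z) (1 / L y * g - k * (1 / L y * G y)) y := by
  refine ((hG.div hL hLy).congr_deriv ?_).congr_of_eventuallyEq ?_
  · field_simp
  · exact Eventually.of_forall fun z => by simp [div_eq_inv_mul]

theorem HasDerivAt.rpow_mul_rpow_one_sub {K L : ℝ → ℝ} {k l y : ℝ} (θ : ℝ)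
    (hK : HasDerivAt K k y) (hL : HasDerivAt L l y) (hKy : K y ≠ 0) (hLy : L y ≠ 0) :
    HasDerivAt (fun z => K z ^ θ * L z ^ (1 - θ))
      (θ * K y ^ (θ - 1) * k * L y ^ (1 - θ) + K y ^ θ * ((1 - θ) * L y ^ (-θ) * l)) y := by
  have hKθ := hK.rpow_const (p := θ) (Or.inl hKy)
  have hLθ := hL.rpow_const (p := 1 - θ) (Or.inl hLy)
  rw [show 1 - θ - 1 = -θ by ring] at hLθ
  refine (hKθ.mul hLθ).congr_deriv ?_
  ring

theorem hasDerivAt_one_div_mul_sq_sub_sq {K L : ℝ → ℝ} {y : ℝ} (a : ℝ)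
    (hK : Differentiable ℝ K) (hK' : Differentiable ℝ (deriv K))
    (hL : HasDerivAt L (L y * deriv K y) y) (hLy : L y ≠ 0) :
    HasDerivAt (fun z => 1 / L z * (deriv K z ^ 2 - (K z ^ 2 - a)))
      (2 / L y * deriv K y * (deriv (deriv K) y - K y)
        - deriv K y * (1 / L y * (deriv K y ^ 2 - (K y ^ 2 - a)))) y := by
  have hG : HasDerivAt (fun z => deriv K z ^ 2 - (K z ^ 2 - a))
      (2 * deriv K y * (deriv (deriv K) y - K y)) y := by
    refine (((hK' y).hasDerivAt.pow 2).sub (((hK y).hasDerivAt.pow 2).sub_const a)).congr_deriv ?_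
    ring
  refine (hG.one_div_mul_of_hasDerivAt_self_mul hL hLy).congr_deriv ?_
  ring

theorem deriv_deriv_add_mul_deriv_of_eq_integral {K L P : ℝ → ℝ} {c a : ℝ}
    (hK : Differentiable ℝ K) (hK' : Differentiable ℝ (deriv K))
    (hL : ∀ y, HasDerivAt L (L y * deriv K y) y) (hLne : ∀ y, L y ≠ 0)
    (hP : ∀ y, P y = c * ∫ z in (0 : ℝ)..y, 1 / L z * (deriv K z ^ 2 - (K z ^ 2 - a))) (y : ℝ) :
    deriv (deriv P) y + deriv K y * deriv P y
      = 2 * c / L y * deriv K y * (deriv (deriv K) y - K y) := by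
  have hF := fun y => hasDerivAt_one_div_mul_sq_sub_sq a hK hK' (hL y) (hLne y)
  have hFc : Continuous fun y => 1 / L y * (deriv K y ^ 2 - (K y ^ 2 - a)) :=
    continuous_iff_continuousAt.2 fun y => (hF y).continuousAt
  have hP' : deriv P = fun y => c * (1 / L y * (deriv K y ^ 2 - (K y ^ 2 - a))) :=
    funext fun y => by
      rw [funext hP]
      exact ((hFc.integral_hasStrictDerivAt 0 y).hasDerivAt.const_mul c).deriv
  rw [hP', ((hF y).const_mul c).deriv]
  ring

theorem adjoint_kernel_element_general (θ S : ℝ)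
    (hS : 0 < S) (K0 : ℝ → ℝ) (hK0 : ContDiff ℝ 3 K0) (hK0pos : ∀ y, 0 < K0 y)
    (heq : ∀ y, deriv (deriv K0) y - K0 y
      + S ^ (1 - θ) * K0 y ^ θ * Real.exp ((1 - θ) * (K0 y - S)) = 0)
    (L0 : ℝ → ℝ) (hL0 : ∀ y, L0 y = S * Real.exp (K0 y - S))
    (P : ℝ → ℝ)
    (hP : ∀ y, P y = (1 - θ) / 2
      * ∫ z in (0 : ℝ)..y, (1 / L0 z) * (deriv K0 z ^ 2 - (K0 z ^ 2 - S ^ 2))) :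
    ∀ y,
      (deriv (deriv P) y + deriv K0 y * deriv P y
        + (1 - θ) * K0 y ^ θ * L0 y ^ (-θ) * deriv K0 y = 0) ∧
      (deriv (deriv (deriv K0)) y - deriv K0 y
        + θ * K0 y ^ (θ - 1) * L0 y ^ (1 - θ) * deriv K0 y
        - deriv L0 y * deriv P y - L0 y * deriv (deriv P) y = 0) := by
  have hK : Differentiable ℝ K0 := hK0.differentiable (by norm_num)
  have hK' : Differentiable ℝ (deriv K0) := (hK0.of_le (by norm_num)).differentiable_deriv_two
  have hL : ∀ y, HasDerivAt L0 (L0 y * deriv K0 y) y := fun y => by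
    have := hasDerivAt_const_mul_exp_sub S S (hK y).hasDerivAt
    rwa [← hL0 y, ← funext hL0] at this
  have hLne : ∀ y, L0 y ≠ 0 := fun y => by rw [hL0]; positivity
  have hK'' : ∀ y, deriv (deriv K0) y = K0 y - K0 y ^ θ * L0 y ^ (1 - θ) := fun y => by
    have := heq y
    rw [hL0, mul_rpow hS.le (exp_pos _).le, ← exp_mul, mul_comm (K0 y - S)]
    linarith
  have hP'' : ∀ y, deriv (deriv P) y + deriv K0 y * deriv P y
      = -((1 - θ) * K0 y ^ θ * L0 y ^ (-θ) * deriv K0 y) := fun y => by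
    rw [deriv_deriv_add_mul_deriv_of_eq_integral hK hK' hL hLne hP, hK'' y,
      show 1 - θ = -θ + 1 by ring, rpow_add_one (hLne y)]
    field_simp [hLne y]
    ring
  have hK''' : ∀ y, deriv (deriv (deriv K0)) y = deriv K0 y
      - (θ * K0 y ^ (θ - 1) * deriv K0 y * L0 y ^ (1 - θ)
        + K0 y ^ θ * ((1 - θ) * L0 y ^ (-θ) * (L0 y * deriv K0 y))) := fun y => by
    rw [funext hK'']
    exact ((hK y).hasDerivAt.sub ((hK y).hasDerivAt.rpow_mul_rpow_one_sub θ (hL y)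
      (hK0pos y).ne' (hLne y))).deriv
  intro y
  refine ⟨by linear_combination hP'' y, ?_⟩
  rw [(hL y).deriv]
  linear_combination hK''' y - L0 y * hP'' y

/-- The pair `(P, Q)` with `Q = K0'` and
`P(y) = ((1-θ)/2) ∫_0^y (1/L0)(K0'² - (K0² - S²)) dz`
lies in the kernel of the adjoint of the linearized inner operator. -/
theorem adjoint_kernel_element (θ S : ℝ) (hθ : θ ∈ Set.Ioo (0 : ℝ) 1)
    (hS : 0 < S) (K0 : ℝ → ℝ) (hK0 : ContDiff ℝ 3 K0) (hK0pos : ∀ y, 0 < K0 y)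
    (heq : ∀ y, deriv (deriv K0) y - K0 y
      + S ^ (1 - θ) * K0 y ^ θ * Real.exp ((1 - θ) * (K0 y - S)) = 0)
    (hKS : Tendsto K0 atTop (nhds S))
    (hK' : Tendsto (deriv K0) atTop (nhds 0))
    (L0 : ℝ → ℝ) (hL0 : ∀ y, L0 y = S * Real.exp (K0 y - S))
    (P : ℝ → ℝ)
    (hP : ∀ y, P y = (1 - θ) / 2
      * ∫ z in (0 : ℝ)..y, (1 / L0 z) * (deriv K0 z ^ 2 - (K0 z ^ 2 - S ^ 2))) :
    ∀ y,
      (deriv (deriv P) y + deriv K0 y * deriv P y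
        + (1 - θ) * K0 y ^ θ * L0 y ^ (-θ) * deriv K0 y = 0) ∧
      (deriv (deriv (deriv K0)) y - deriv K0 y
        + θ * K0 y ^ (θ - 1) * L0 y ^ (1 - θ) * deriv K0 y
        - deriv L0 y * deriv P y - L0 y * deriv (deriv P) y = 0) :=
  adjoint_kernel_element_general θ S hS K0 hK0 hK0pos heq L0 hL0 P hP
end

section
/- Let P, Q, K0, L0 : ℝ → ℝ with P, Q twice continuously differentiable, K0 continuously differentiable, L0 continuously differentiable and positive with L0' = L0 K0', θ ∈ (0,1), and suppose P'' + K0' P' + (1−θ) K0^θ L0^{−θ} Q = 0 and Q'' − Q + θ K0^{θ−1} L0^{1−θ} Q − L0' P' − L0 P'' = 0 on ℝ (with K0 > 0). Then Q satisfies the decoupled equation Q'' − Q + θ K0^{θ−1} L0^{1−θ} Q + (1−θ) K0^θ L0^{1−θ} Q = 0 on ℝ. -/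
theorem Real.mul_rpow_neg_eq_rpow_one_sub {x : ℝ} (hx : x ≠ 0) (θ : ℝ) :
    x * x ^ (-θ) = x ^ (1 - θ) := by
  rw [sub_eq_neg_add, Real.rpow_add_one hx, mul_comm]

theorem adjoint_elimination_general (θ : ℝ)
    (P Q K0 L0 : ℝ → ℝ)
    (hL0pos : ∀ y, 0 < L0 y)
    (hslave : ∀ y, deriv L0 y = L0 y * deriv K0 y)
    (heqP : ∀ y, deriv (deriv P) y + deriv K0 y * deriv P y
      + (1 - θ) * K0 y ^ θ * L0 y ^ (-θ) * Q y = 0)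
    (heqQ : ∀ y, deriv (deriv Q) y - Q y
      + θ * K0 y ^ (θ - 1) * L0 y ^ (1 - θ) * Q y
      - deriv L0 y * deriv P y - L0 y * deriv (deriv P) y = 0) :
    ∀ y, deriv (deriv Q) y - Q y
      + θ * K0 y ^ (θ - 1) * L0 y ^ (1 - θ) * Q y
      + (1 - θ) * K0 y ^ θ * L0 y ^ (1 - θ) * Q y = 0 := by
  intro y
  linear_combination heqQ y + L0 y * heqP y + deriv P y * hslave y
    - (1 - θ) * K0 y ^ θ * Q y * Real.mul_rpow_neg_eq_rpow_one_sub (hL0pos y).ne' θ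

/-- Elimination step in the adjoint system: multiplying the `P`-equation by
`L0` and adding the `Q`-equation, using `L0' = L0 K0'`, yields a closed
second-order equation for `Q`. -/
theorem adjoint_elimination (θ : ℝ) (hθ : θ ∈ Set.Ioo (0 : ℝ) 1)
    (P Q K0 L0 : ℝ → ℝ)
    (hP : ContDiff ℝ 2 P) (hQ : ContDiff ℝ 2 Q)
    (hK0 : ContDiff ℝ 1 K0) (hL0 : ContDiff ℝ 1 L0)
    (hL0pos : ∀ y, 0 < L0 y) (hK0pos : ∀ y, 0 < K0 y)
    (hslave : ∀ y, deriv L0 y = L0 y * deriv K0 y)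
    (heqP : ∀ y, deriv (deriv P) y + deriv K0 y * deriv P y
      + (1 - θ) * K0 y ^ θ * L0 y ^ (-θ) * Q y = 0)
    (heqQ : ∀ y, deriv (deriv Q) y - Q y
      + θ * K0 y ^ (θ - 1) * L0 y ^ (1 - θ) * Q y
      - deriv L0 y * deriv P y - L0 y * deriv (deriv P) y = 0) :
    ∀ y, deriv (deriv Q) y - Q y
      + θ * K0 y ^ (θ - 1) * L0 y ^ (1 - θ) * Q y
      + (1 - θ) * K0 y ^ θ * L0 y ^ (1 - θ) * Q y = 0 :=
  adjoint_elimination_general θ P Q K0 L0 hL0pos hslave heqP heqQ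
end

section
/- Let θ ∈ (0,1), S > 0, let K0 : ℝ → ℝ be twice continuously differentiable, positive, solving the core profile equation K0'' − K0 + S^{1−θ} K0^θ e^{(1−θ)(K0−S)} = 0 on ℝ, with K0(y) → S and K0'(y) → 0 as y → +∞, and suppose K0'(z) < 0 for all z > 0. Set L0 := S e^{K0 − S}. Then K0'(z)² < K0(z)² − S² for every z > 0, and consequently P(y) := ((1−θ)/2) ∫_0^y (1/L0(z)) (K0'(z)² − (K0(z)² − S²)) dz < 0 for every y > 0. -/
open Filter Set Topology

/-!
Along a solution of `K'' - K + N(K) = 0` the "energy" `E = K'² - K²` satisfies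
`E' = 2 K' (K'' - K) = -2 K' N(K)`, which is positive wherever `K' < 0`, since the
nonlinearity `N(K) = S^{1-θ} K^θ e^{(1-θ)(K-S)}` is positive. So `E` increases strictly on
`[0, ∞)` towards its limit `-S²` at `+∞`, giving `K'² - (K² - S²) < 0` there; the integrand
of `P` is this quantity times the positive weight `1 / L0`.
-/

theorem StrictMonoOn.lt_of_tendsto_atTop {α β : Type*} [LinearOrder α] [NoMaxOrder α]
    [TopologicalSpace β] [Preorder β] [OrderClosedTopology β] {f : α → β} {a x : α} {l : β}
    (hf : StrictMonoOn f (Ici a)) (hl : Tendsto f atTop (𝓝 l)) (hx : a ≤ x) : f x < l := by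
  have : Nonempty α := ⟨a⟩
  obtain ⟨y, hxy⟩ := exists_gt x
  have hya : a ≤ y := hx.trans hxy.le
  have hy : f y ≤ l := ge_of_tendsto hl <| by
    filter_upwards [eventually_ge_atTop y] with t hyt
    exact hf.monotoneOn hya (hya.trans hyt) hyt
  exact (hf hx hya hxy).trans_le hy

theorem hasDerivAt_deriv_sq_sub_sq {K : ℝ → ℝ} {y : ℝ} (hK : DifferentiableAt ℝ K y)
    (hK' : DifferentiableAt ℝ (deriv K) y) :
    HasDerivAt (fun z => deriv K z ^ 2 - K z ^ 2)
      (2 * deriv K y * (deriv (deriv K) y - K y)) y := by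
  refine ((hK'.hasDerivAt.fun_pow 2).fun_sub (hK.hasDerivAt.fun_pow 2)).congr_deriv ?_
  norm_num
  ring

theorem deriv_sq_lt_sq_sub_sq_of_tendsto {K : ℝ → ℝ} {S : ℝ} (hK : Differentiable ℝ K)
    (hK' : Differentiable ℝ (deriv K)) (hKS : Tendsto K atTop (𝓝 S))
    (hK'0 : Tendsto (deriv K) atTop (𝓝 0)) (hdec : ∀ z > 0, deriv K z < 0)
    (hK'' : ∀ z > 0, deriv (deriv K) z < K z) {z : ℝ} (hz : 0 ≤ z) :
    deriv K z ^ 2 < K z ^ 2 - S ^ 2 := by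
  set E : ℝ → ℝ := fun z => deriv K z ^ 2 - K z ^ 2
  have hE : ∀ y, HasDerivAt E (2 * deriv K y * (deriv (deriv K) y - K y)) y :=
    fun y => hasDerivAt_deriv_sq_sub_sq (hK y) (hK' y)
  have hE_mono : StrictMonoOn E (Ici 0) := by
    refine strictMonoOn_of_deriv_pos (convex_Ici 0)
      (fun y _ => (hE y).continuousAt.continuousWithinAt) fun y hy => ?_
    rw [interior_Ici] at hy
    rw [(hE y).deriv]
    exact mul_pos_of_neg_of_neg (by linarith [hdec y hy]) (by linarith [hK'' y hy])
  have hE_lim : Tendsto E atTop (𝓝 (0 ^ 2 - S ^ 2)) := (hK'0.pow 2).sub (hKS.pow 2)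
  have := hE_mono.lt_of_tendsto_atTop hE_lim hz
  simp only [E] at this
  linarith

theorem intervalIntegral_neg_of_neg_on {f : ℝ → ℝ} {a b : ℝ}
    (hfi : IntervalIntegrable f MeasureTheory.volume a b) (hneg : ∀ x ∈ Ioo a b, f x < 0)
    (hab : a < b) : ∫ x in a..b, f x < 0 := by
  have := intervalIntegral.intervalIntegral_pos_of_pos_on hfi.neg
    (fun x hx => neg_pos.mpr (hneg x hx)) hab
  simpa only [Pi.neg_apply, intervalIntegral.integral_neg, neg_pos] using this

/-- Negativity of the adjoint null eigenfunction component `P`: for the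
decreasing homoclinic core profile, `K0'² < K0² - S²` on `(0,∞)`, hence
`P(y) < 0` for all `y > 0`. -/
theorem adjoint_component_negative (θ S : ℝ) (hθ : θ ∈ Set.Ioo (0 : ℝ) 1)
    (hS : 0 < S) (K0 : ℝ → ℝ) (hK0 : ContDiff ℝ 2 K0) (hK0pos : ∀ y, 0 < K0 y)
    (heq : ∀ y, deriv (deriv K0) y - K0 y
      + S ^ (1 - θ) * K0 y ^ θ * Real.exp ((1 - θ) * (K0 y - S)) = 0)
    (hKS : Tendsto K0 atTop (nhds S))
    (hK' : Tendsto (deriv K0) atTop (nhds 0))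
    (hKdec : ∀ z > (0 : ℝ), deriv K0 z < 0) :
    (∀ z > (0 : ℝ), deriv K0 z ^ 2 < K0 z ^ 2 - S ^ 2) ∧
    ∀ y > (0 : ℝ),
      (1 - θ) / 2 * ∫ z in (0 : ℝ)..y,
          (1 / (S * Real.exp (K0 z - S))) * (deriv K0 z ^ 2 - (K0 z ^ 2 - S ^ 2))
        < 0 := by
  have hK0_deriv : ContDiff ℝ 1 (deriv K0) := hK0.deriv'
  have hK0'' : ∀ z > (0 : ℝ), deriv (deriv K0) z < K0 z := fun z _ => by
    have := hK0pos z
    have : 0 < S ^ (1 - θ) * K0 z ^ θ * Real.exp ((1 - θ) * (K0 z - S)) := by positivity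
    linarith [heq z]
  have hgap : ∀ z > (0 : ℝ), deriv K0 z ^ 2 < K0 z ^ 2 - S ^ 2 := fun z hz =>
    deriv_sq_lt_sq_sub_sq_of_tendsto (hK0.differentiable two_ne_zero)
      (hK0_deriv.differentiable one_ne_zero) hKS hK' hKdec hK0'' hz.le
  refine ⟨hgap, fun y hy => mul_neg_of_pos_of_neg (by linarith [hθ.2]) ?_⟩
  have hcont : Continuous fun z =>
      1 / (S * Real.exp (K0 z - S)) * (deriv K0 z ^ 2 - (K0 z ^ 2 - S ^ 2)) := by
    have := hK0.continuous
    have := hK0_deriv.continuous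
    have hL : ∀ z, S * Real.exp (K0 z - S) ≠ 0 := fun z => by positivity
    fun_prop (disch := assumption)
  refine intervalIntegral_neg_of_neg_on (hcont.intervalIntegrable 0 y) (fun z hz => ?_) hy
  have := hgap z hz.1
  exact mul_neg_of_pos_of_neg (by positivity) (by linarith)
end

section
/- Let a, b > 0, x0 ∈ (−1, 1), S0 > 0, and assume cos(√(ab)(x0 − 1)) ≠ 0 and cos(√(ab)(x0 + 1)) ≠ 0. Define l : [−1, 1] → ℝ by l(x) = S0 cos(√(ab)(x − 1))/cos(√(ab)(x0 − 1)) for x0 ≤ x ≤ 1 and l(x) = S0 cos(√(ab)(x + 1))/cos(√(ab)(x0 + 1)) for −1 ≤ x ≤ x0. Then l is continuous, l(x0) = S0, l satisfies l'' + a b l = 0 on (x0, 1) and on (−1, x0), l'(1) = l'(−1) = 0, and the one-sided derivatives at x0 satisfy l'(x0⁺) − l'(x0⁻) = −S0 √(ab) ( tan(√(ab)(x0 − 1)) − tan(√(ab)(x0 + 1)) ). -/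
/-!
On each side of the spike the profile is `S0 cos (s (x - p)) / cos (s (x0 - p))` with `s = √(ab)`
and `p = ±1` the adjacent boundary point. Such a function solves `l'' + s² l = 0`, is critical at
`p` and equals `S0` at `x0`, where its slope is `-S0 s tan (s (x0 - p))`; the jump is the
difference of the two slopes.
-/

open Set

/-- Outer labor profile of a quasi-equilibrium spike located at `x0`. -/
noncomputable def spikeOuter (a b x0 S0 : ℝ) : ℝ → ℝ := fun x =>
  if x ≤ x0 then
    S0 * Real.cos (Real.sqrt (a * b) * (x + 1))
      / Real.cos (Real.sqrt (a * b) * (x0 + 1))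
  else
    S0 * Real.cos (Real.sqrt (a * b) * (x - 1))
      / Real.cos (Real.sqrt (a * b) * (x0 - 1))

open Filter Topology Real

/-- The solution of `l'' + s² l = 0` with `l'(p) = 0`, normalised by `l(x0) = S`. -/
noncomputable def neumannCos (s p x0 S : ℝ) (x : ℝ) : ℝ :=
  S * cos (s * (x - p)) / cos (s * (x0 - p))

section NeumannCos

variable (s p x0 S : ℝ)

theorem hasDerivAt_mul_sub (x : ℝ) : HasDerivAt (fun y => s * (y - p)) s x := by
  simpa using ((hasDerivAt_id x).sub_const p).const_mul s

theorem continuous_neumannCos : Continuous (neumannCos s p x0 S) := by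
  unfold neumannCos
  fun_prop

theorem neumannCos_self {s p x0 : ℝ} (S : ℝ) (h : cos (s * (x0 - p)) ≠ 0) :
    neumannCos s p x0 S x0 = S := by
  rw [neumannCos, mul_div_assoc, div_self h, mul_one]

theorem hasDerivAt_neumannCos (x : ℝ) :
    HasDerivAt (neumannCos s p x0 S) (-S * s * sin (s * (x - p)) / cos (s * (x0 - p))) x :=
  ((((hasDerivAt_cos _).comp x (hasDerivAt_mul_sub s p x)).const_mul S).div_const _).congr_deriv
    (by ring)

theorem hasDerivAt_neumannCos_anchor : HasDerivAt (neumannCos s p x0 S) 0 p := by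
  simpa using hasDerivAt_neumannCos s p x0 S p

theorem hasDerivAt_neumannCos_spike :
    HasDerivAt (neumannCos s p x0 S) (-S * s * tan (s * (x0 - p))) x0 :=
  (hasDerivAt_neumannCos s p x0 S x0).congr_deriv (by rw [tan_eq_sin_div_cos, mul_div_assoc])

theorem deriv_neumannCos :
    deriv (neumannCos s p x0 S) = fun x => -S * s * sin (s * (x - p)) / cos (s * (x0 - p)) :=
  funext fun x => (hasDerivAt_neumannCos s p x0 S x).deriv

theorem hasDerivAt_deriv_neumannCos (x : ℝ) :
    HasDerivAt (deriv (neumannCos s p x0 S)) (-s ^ 2 * neumannCos s p x0 S x) x := by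
  rw [deriv_neumannCos]
  exact ((((hasDerivAt_sin _).comp x (hasDerivAt_mul_sub s p x)).const_mul (-S * s)).div_const
    _).congr_deriv (by unfold neumannCos; ring)

end NeumannCos

theorem deriv_deriv_add_sq_mul_of_eventuallyEq_neumannCos {s p x0 S x : ℝ} {l : ℝ → ℝ}
    (h : l =ᶠ[𝓝 x] neumannCos s p x0 S) : deriv (deriv l) x + s ^ 2 * l x = 0 := by
  rw [h.deriv.deriv_eq, (hasDerivAt_deriv_neumannCos s p x0 S x).deriv, h.eq_of_nhds]
  ring

section Piecewise

variable {f g : ℝ → ℝ} {x0 x : ℝ}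

theorem ite_le_eventuallyEq_left (h : x < x0) :
    (fun y => if y ≤ x0 then f y else g y) =ᶠ[𝓝 x] f :=
  eventuallyEq_of_mem (Iio_mem_nhds h) fun _ hy => if_pos (le_of_lt hy)

theorem ite_le_eventuallyEq_right (h : x0 < x) :
    (fun y => if y ≤ x0 then f y else g y) =ᶠ[𝓝 x] g :=
  eventuallyEq_of_mem (Ioi_mem_nhds h) fun _ hy => if_neg (not_le.mpr hy)

theorem derivWithin_Iic_ite_le {f' : ℝ} (hf : HasDerivAt f f' x0) :
    derivWithin (fun y => if y ≤ x0 then f y else g y) (Iic x0) x0 = f' :=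
  (hf.hasDerivWithinAt.congr (fun _ hy => if_pos (mem_Iic.mp hy)) (if_pos le_rfl)).derivWithin
    (uniqueDiffOn_Iic x0 x0 self_mem_Iic)

theorem derivWithin_Ici_ite_le {g' : ℝ} (hfg : f x0 = g x0) (hg : HasDerivAt g g' x0) :
    derivWithin (fun y => if y ≤ x0 then f y else g y) (Ici x0) x0 = g' := by
  have hagree : ∀ y ∈ Ici x0, (if y ≤ x0 then f y else g y) = g y := by
    intro y hy
    split_ifs with hle
    · rw [le_antisymm hle hy, hfg]
    · rfl
  exact (hg.hasDerivWithinAt.congr hagree (hagree x0 self_mem_Ici)).derivWithin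
    (uniqueDiffOn_Ici x0 x0 self_mem_Ici)

end Piecewise

theorem spikeOuter_eq_ite (a b x0 S0 : ℝ) :
    spikeOuter a b x0 S0 = fun x => if x ≤ x0 then neumannCos √(a * b) (-1) x0 S0 x
      else neumannCos √(a * b) 1 x0 S0 x := by
  ext x
  simp only [spikeOuter, neumannCos, sub_neg_eq_add]

theorem spike_outer_profile_general (a b x0 S0 : ℝ) (ha : 0 < a) (hb : 0 < b)
    (hx0 : x0 ∈ Ioo (-1 : ℝ) 1)
    (hc1 : Real.cos (Real.sqrt (a * b) * (x0 - 1)) ≠ 0)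
    (hc2 : Real.cos (Real.sqrt (a * b) * (x0 + 1)) ≠ 0) :
    ContinuousOn (spikeOuter a b x0 S0) (Icc (-1) 1) ∧
    spikeOuter a b x0 S0 x0 = S0 ∧
    (∀ x ∈ Ioo x0 1,
      deriv (deriv (spikeOuter a b x0 S0)) x + a * b * spikeOuter a b x0 S0 x = 0) ∧
    (∀ x ∈ Ioo (-1 : ℝ) x0,
      deriv (deriv (spikeOuter a b x0 S0)) x + a * b * spikeOuter a b x0 S0 x = 0) ∧
    derivWithin (spikeOuter a b x0 S0) (Icc (-1) 1) 1 = 0 ∧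
    derivWithin (spikeOuter a b x0 S0) (Icc (-1) 1) (-1) = 0 ∧
    derivWithin (spikeOuter a b x0 S0) (Ici x0) x0
        - derivWithin (spikeOuter a b x0 S0) (Iic x0) x0
      = -S0 * Real.sqrt (a * b)
        * (Real.tan (Real.sqrt (a * b) * (x0 - 1))
            - Real.tan (Real.sqrt (a * b) * (x0 + 1))) := by
  rw [spikeOuter_eq_ite]
  set s := √(a * b)
  have hs : s ^ 2 = a * b := sq_sqrt (by positivity)
  rw [← hs]
  have hL := neumannCos_self S0 (p := -1) (by rwa [sub_neg_eq_add])
  have hR := neumannCos_self S0 hc1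
  have hIcc := uniqueDiffOn_Icc (show (-1 : ℝ) < 1 by norm_num)
  refine ⟨?_, if_pos le_rfl |>.trans hL, fun x hx => ?_, fun x hx => ?_, ?_, ?_, ?_⟩
  · exact ((continuous_neumannCos ..).if_le (continuous_neumannCos ..) continuous_id
      continuous_const fun x hx => by rw [show x = x0 from hx, hL, hR]).continuousOn
  · exact deriv_deriv_add_sq_mul_of_eventuallyEq_neumannCos (ite_le_eventuallyEq_right hx.1)
  · exact deriv_deriv_add_sq_mul_of_eventuallyEq_neumannCos (ite_le_eventuallyEq_left hx.2)
  · exact ((hasDerivAt_neumannCos_anchor ..).congr_of_eventuallyEq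
      (ite_le_eventuallyEq_right hx0.2)).hasDerivWithinAt.derivWithin (hIcc 1 (by norm_num))
  · exact ((hasDerivAt_neumannCos_anchor ..).congr_of_eventuallyEq
      (ite_le_eventuallyEq_left hx0.1)).hasDerivWithinAt.derivWithin (hIcc (-1) (by norm_num))
  · rw [derivWithin_Ici_ite_le (hL.trans hR.symm) (hasDerivAt_neumannCos_spike ..),
      derivWithin_Iic_ite_le (hasDerivAt_neumannCos_spike ..), sub_neg_eq_add]
    ring

/-- Properties of the outer labor profile of a quasi-equilibrium spike at
`x0`: continuity, value `S0` at the spike, the ODE `l'' + ab l = 0` on either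
side, Neumann conditions at `±1`, and the jump of the one-sided derivatives
across `x0`. -/
theorem spike_outer_profile (a b x0 S0 : ℝ) (ha : 0 < a) (hb : 0 < b)
    (hx0 : x0 ∈ Ioo (-1 : ℝ) 1) (hS0 : 0 < S0)
    (hc1 : Real.cos (Real.sqrt (a * b) * (x0 - 1)) ≠ 0)
    (hc2 : Real.cos (Real.sqrt (a * b) * (x0 + 1)) ≠ 0) :
    ContinuousOn (spikeOuter a b x0 S0) (Icc (-1) 1) ∧
    spikeOuter a b x0 S0 x0 = S0 ∧
    (∀ x ∈ Ioo x0 1,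
      deriv (deriv (spikeOuter a b x0 S0)) x + a * b * spikeOuter a b x0 S0 x = 0) ∧
    (∀ x ∈ Ioo (-1 : ℝ) x0,
      deriv (deriv (spikeOuter a b x0 S0)) x + a * b * spikeOuter a b x0 S0 x = 0) ∧
    derivWithin (spikeOuter a b x0 S0) (Icc (-1) 1) 1 = 0 ∧
    derivWithin (spikeOuter a b x0 S0) (Icc (-1) 1) (-1) = 0 ∧
    derivWithin (spikeOuter a b x0 S0) (Ici x0) x0
        - derivWithin (spikeOuter a b x0 S0) (Iic x0) x0
      = -S0 * Real.sqrt (a * b)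
        * (Real.tan (Real.sqrt (a * b) * (x0 - 1))
            - Real.tan (Real.sqrt (a * b) * (x0 + 1))) :=
  spike_outer_profile_general a b x0 S0 ha hb hx0 hc1 hc2
end
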